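/- Let Q ≥ 2 be an integer, let α, β ∈ [0,1] with α ≠ β, and set s_k = Q^{1−k} (uniform group proportions π_q = 1/Q). Define m_1 = s_2 α + (1−s_2) β and m_41 = s_4 α⁴ + 2(s_2²+2 s_3−3 s_4) α² β² + 4(s_2−s_2²−2 s_3+2 s_4) α β³ + (1−4 s_2+2 s_2²+4 s_3−3 s_4) β⁴. Then m_41 > m_1⁴; indeed m_41 − m_1⁴ = (α−β)⁴ (Q−1)/Q⁴ > 0. -/

import Mathlib

section Affiliation

variable {R : Type*} [CommRing R]

/-- The moment `m₁ = E(X₁₂)`, in terms of the power sum `s₂ = Σ_q π_q²`. -/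
def affiliationM1 (s₂ α β : R) : R :=
  s₂ * α + (1 - s₂) * β

/-- The moment `m₄₁ = E(X₁₂X₂₃X₃₄X₄₁)`, in terms of the power sums `s_k = Σ_q π_q^k`. -/
def affiliationM41 (s₂ s₃ s₄ α β : R) : R :=
  s₄ * α ^ 4 + 2 * (s₂ ^ 2 + 2 * s₃ - 3 * s₄) * α ^ 2 * β ^ 2
    + 4 * (s₂ - s₂ ^ 2 - 2 * s₃ + 2 * s₄) * α * β ^ 3
    + (1 - 4 * s₂ + 2 * s₂ ^ 2 + 4 * s₃ - 3 * s₄) * β ^ 4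

/-- With uniform proportions `π_q = x`, the power sums are `s_k = x^(k-1)`. -/
theorem affiliationM41_sub_affiliationM1_pow_four_of_uniform (x α β : R) :
    affiliationM41 x (x ^ 2) (x ^ 3) α β - affiliationM1 x α β ^ 4
      = (α - β) ^ 4 * (x ^ 3 * (1 - x)) := by
  unfold affiliationM41 affiliationM1
  ring

end Affiliation

theorem affiliation_uniform_m41_gt_m1_pow4_general
    (Q : ℕ) (hQ : 2 ≤ Q)
    (α β : ℝ)
    (hαβ : α ≠ β)
    (s₂ s₃ s₄ m₁ m₄₁ : ℝ)
    (hs₂ : s₂ = ((Q : ℝ))⁻¹) (hs₃ : s₃ = ((Q : ℝ) ^ 2)⁻¹) (hs₄ : s₄ = ((Q : ℝ) ^ 3)⁻¹)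
    (hm₁ : m₁ = s₂ * α + (1 - s₂) * β)
    (hm₄₁ : m₄₁ = s₄ * α ^ 4 + 2 * (s₂ ^ 2 + 2 * s₃ - 3 * s₄) * α ^ 2 * β ^ 2
      + 4 * (s₂ - s₂ ^ 2 - 2 * s₃ + 2 * s₄) * α * β ^ 3
      + (1 - 4 * s₂ + 2 * s₂ ^ 2 + 4 * s₃ - 3 * s₄) * β ^ 4) :
    m₄₁ - m₁ ^ 4 = (α - β) ^ 4 * ((Q : ℝ) - 1) / (Q : ℝ) ^ 4 ∧ m₁ ^ 4 < m₄₁ := by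
  have hQ1 : (1 : ℝ) < Q := by exact_mod_cast hQ
  rw [← inv_pow] at hs₃ hs₄
  have hgap : m₄₁ - m₁ ^ 4 = (α - β) ^ 4 * ((Q : ℝ)⁻¹ ^ 3 * (1 - (Q : ℝ)⁻¹)) := by
    subst hs₂ hs₃ hs₄ hm₁ hm₄₁
    exact affiliationM41_sub_affiliationM1_pow_four_of_uniform _ α β
  have hpos : 0 < (α - β) ^ 4 * ((Q : ℝ)⁻¹ ^ 3 * (1 - (Q : ℝ)⁻¹)) :=
    mul_pos (Even.pow_pos (by decide) (sub_ne_zero.mpr hαβ))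
      (mul_pos (by positivity) (sub_pos.mpr (inv_lt_one_of_one_lt₀ hQ1)))
  refine ⟨hgap.trans ?_, by linarith⟩
  field_simp

/-- In the binary affiliation model with uniform group priors (`s_k = Q^{1-k}`) and
`α ≠ β`, the moment inequality `m₄₁ > m₁⁴` holds; indeed
`m₄₁ - m₁⁴ = (α-β)⁴(Q-1)/Q⁴ > 0`. -/
theorem affiliation_uniform_m41_gt_m1_pow4
    (Q : ℕ) (hQ : 2 ≤ Q)
    (α β : ℝ) (hα : α ∈ Set.Icc (0 : ℝ) 1) (hβ : β ∈ Set.Icc (0 : ℝ) 1)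
    (hαβ : α ≠ β)
    (s₂ s₃ s₄ m₁ m₄₁ : ℝ)
    (hs₂ : s₂ = ((Q : ℝ))⁻¹) (hs₃ : s₃ = ((Q : ℝ) ^ 2)⁻¹) (hs₄ : s₄ = ((Q : ℝ) ^ 3)⁻¹)
    (hm₁ : m₁ = s₂ * α + (1 - s₂) * β)
    (hm₄₁ : m₄₁ = s₄ * α ^ 4 + 2 * (s₂ ^ 2 + 2 * s₃ - 3 * s₄) * α ^ 2 * β ^ 2
      + 4 * (s₂ - s₂ ^ 2 - 2 * s₃ + 2 * s₄) * α * β ^ 3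
      + (1 - 4 * s₂ + 2 * s₂ ^ 2 + 4 * s₃ - 3 * s₄) * β ^ 4) :
    m₄₁ - m₁ ^ 4 = (α - β) ^ 4 * ((Q : ℝ) - 1) / (Q : ℝ) ^ 4 ∧ m₁ ^ 4 < m₄₁ :=
  affiliation_uniform_m41_gt_m1_pow4_general Q hQ α β hαβ s₂ s₃ s₄ m₁ m₄₁ hs₂ hs₃ hs₄ hm₁ hm₄₁
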